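/- Suppose A belongs to the class 𝒜 and X is a σ-Dedekind complete Banach lattice. Then l_Φ^A(X), equipped with the coordinatewise order and the norm ‖·‖_Φ^A, is a Banach lattice (in particular |x̄| ≤ |ȳ| coordinatewise implies ‖x̄‖_Φ^A ≤ ‖ȳ‖_Φ^A), and it is σ-Dedekind complete: every sequence (x̄^{(n)}) of nonnegative elements of l_Φ^A(X) that is order bounded above by some ȳ ∈ l_Φ^A(X) has a supremum in l_Φ^A(X). -/

import Mathlib

open Filter Topology

/-- An Orlicz function: convex, nondecreasing, continuous on `[0,∞)`,
vanishing at `0`, positive on `(0,∞)`, tending to `∞` at `∞`. -/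
structure IsOrliczFn (φ : ℝ → ℝ) : Prop where
  convexOn : ConvexOn ℝ (Set.Ici (0 : ℝ)) φ
  monotoneOn : MonotoneOn φ (Set.Ici (0 : ℝ))
  continuousOn : ContinuousOn φ (Set.Ici (0 : ℝ))
  map_zero : φ 0 = 0
  pos : ∀ t : ℝ, 0 < t → 0 < φ t
  tendsto_atTop : Filter.Tendsto φ Filter.atTop Filter.atTop

/-- A Musielak-Orlicz function: a sequence of Orlicz functions. -/
def IsMusielakOrlicz (Φ : ℕ → ℝ → ℝ) : Prop := ∀ n, IsOrliczFn (Φ n)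

/-- Condition δ₂ for a Musielak-Orlicz function. -/
def MOCondDelta2 (Φ : ℕ → ℝ → ℝ) : Prop :=
  ∃ K > (0 : ℝ), ∃ δ > (0 : ℝ), ∃ c : ℕ → ℝ, (∀ n, 0 ≤ c n) ∧ Summable c ∧
    ∀ n : ℕ, ∀ x : ℝ, 0 ≤ x → Φ n x ≤ δ → Φ n (2 * x) ≤ K * Φ n x + c n

/-- Condition (*) for a Musielak-Orlicz function. -/
def MOCondStar (Φ : ℕ → ℝ → ℝ) : Prop :=
  ∀ ε : ℝ, ε ∈ Set.Ioo (0 : ℝ) 1 → ∃ δ > (0 : ℝ), ∀ n : ℕ, ∀ u : ℝ, 0 ≤ u →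
    Φ n u < 1 - ε → Φ n ((1 + δ) * u) ≤ 1

/-- The class 𝒜 of infinite matrices: every column is nonzero. -/
def MatrixClassA (a : ℕ → ℕ → ℝ) : Prop := ∀ k, ∃ n, a n k ≠ 0

/-- A triangle matrix: nonzero diagonal, zero above the diagonal. -/
def IsTriangle (a : ℕ → ℕ → ℝ) : Prop := (∀ n, a n n ≠ 0) ∧ ∀ n k, n < k → a n k = 0

/-- The `n`-th row sum `∑_k |a_{nk}| ‖x_k‖`. -/
noncomputable def rowSum {X : Type*} [NormedAddCommGroup X]
    (a : ℕ → ℕ → ℝ) (x : ℕ → X) (n : ℕ) : ℝ :=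
  ∑' k, |a n k| * ‖x k‖

/-- Membership in the generalized Musielak-Orlicz sequence space `l_Φ^A(X)`:
`x` is a bounded sequence whose row sums are finite and
`∑_n φ_n(rowSum_n / σ) < ∞` for some `σ > 0`. -/
def MemL {X : Type*} [NormedAddCommGroup X]
    (Φ : ℕ → ℝ → ℝ) (a : ℕ → ℕ → ℝ) (x : ℕ → X) : Prop :=
  (∃ C : ℝ, ∀ k, ‖x k‖ ≤ C) ∧ (∀ n, Summable fun k => |a n k| * ‖x k‖) ∧
    ∃ σ > (0 : ℝ), Summable fun n => Φ n (rowSum a x n / σ)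

/-- Membership in `h_Φ^A(X)`: as `MemL` but for every `σ > 0`. -/
def MemH {X : Type*} [NormedAddCommGroup X]
    (Φ : ℕ → ℝ → ℝ) (a : ℕ → ℕ → ℝ) (x : ℕ → X) : Prop :=
  (∃ C : ℝ, ∀ k, ‖x k‖ ≤ C) ∧ (∀ n, Summable fun k => |a n k| * ‖x k‖) ∧
    ∀ σ > (0 : ℝ), Summable fun n => Φ n (rowSum a x n / σ)

/-- The Luxemburg-type norm `‖x‖_Φ^A`. -/
noncomputable def ANorm {X : Type*} [NormedAddCommGroup X]
    (Φ : ℕ → ℝ → ℝ) (a : ℕ → ℕ → ℝ) (x : ℕ → X) : ℝ :=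
  sInf {σ : ℝ | 0 < σ ∧ (Summable fun n => Φ n (rowSum a x n / σ)) ∧
    (∑' n, Φ n (rowSum a x n / σ)) ≤ 1}

/-- The modular `ρ_Φ^A(x) = ∑_n φ_n(∑_k |a_{nk}| ‖x_k‖)`. -/
noncomputable def rhoA {X : Type*} [NormedAddCommGroup X]
    (Φ : ℕ → ℝ → ℝ) (a : ℕ → ℕ → ℝ) (x : ℕ → X) : ℝ :=
  ∑' n, Φ n (rowSum a x n)

/-- The `m`-th section of a sequence: first `m` coordinates kept, rest zero. -/
def sect {X : Type*} [Zero X] (x : ℕ → X) (m : ℕ) : ℕ → X :=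
  fun k => if k < m then x k else 0

/-! The lattice operations and the order act coordinatewise, and every inequality that matters
between coordinates, `‖x ⊔ y‖ ≤ ‖x‖ + ‖y‖` and `‖x‖ ≤ ‖y‖` for `|x| ≤ |y|`, passes to the row
sums `∑_k |a_{nk}| ‖x_k‖`. Since the Orlicz functions are monotone and convex, the modular
condition is inherited by anything whose row sums are dominated by a sum `r + s` of admissible
row sums, at the price of doubling `σ`. The supremum of an order bounded sequence is taken
coordinatewise in `X`; it is squeezed between `0` and the upper bound, hence in the space. -/

namespace IsOrliczFn

variable {φ : ℝ → ℝ} (hφ : IsOrliczFn φ)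
include hφ

theorem map_le_map {s t : ℝ} (hs : 0 ≤ s) (hst : s ≤ t) : φ s ≤ φ t :=
  hφ.monotoneOn (Set.mem_Ici.2 hs) (Set.mem_Ici.2 (hs.trans hst)) hst

theorem nonneg {t : ℝ} (ht : 0 ≤ t) : 0 ≤ φ t :=
  hφ.map_zero ▸ hφ.map_le_map le_rfl ht

theorem map_mul_le {c t : ℝ} (hc₀ : 0 ≤ c) (hc₁ : c ≤ 1) (ht : 0 ≤ t) : φ (c * t) ≤ c * φ t := by
  have h := hφ.convexOn.2 (Set.mem_Ici.2 le_rfl) (Set.mem_Ici.2 ht) (sub_nonneg.2 hc₁) hc₀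
    (sub_add_cancel 1 c)
  simpa [hφ.map_zero] using h

theorem map_add_div_two_le {u v : ℝ} (hu : 0 ≤ u) (hv : 0 ≤ v) :
    φ ((u + v) / 2) ≤ (φ u + φ v) / 2 := by
  have h := hφ.convexOn.2 (Set.mem_Ici.2 hu) (Set.mem_Ici.2 hv) (by norm_num : (0 : ℝ) ≤ 1 / 2)
    (by norm_num : (0 : ℝ) ≤ 1 / 2) (by norm_num)
  simp only [smul_eq_mul] at h
  rw [show (u + v) / 2 = 1 / 2 * u + 1 / 2 * v by ring]
  linarith

end IsOrliczFn

namespace IsMusielakOrlicz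

variable {Φ : ℕ → ℝ → ℝ} (hΦ : IsMusielakOrlicz Φ) {r s : ℕ → ℝ}
include hΦ

theorem summable_of_le (hr : ∀ n, 0 ≤ r n) (hrs : ∀ n, r n ≤ s n)
    (hs : Summable fun n => Φ n (s n)) : Summable fun n => Φ n (r n) :=
  hs.of_nonneg_of_le (fun n => (hΦ n).nonneg (hr n)) fun n => (hΦ n).map_le_map (hr n) (hrs n)

theorem tsum_le_of_le (hr : ∀ n, 0 ≤ r n) (hrs : ∀ n, r n ≤ s n)
    (hs : Summable fun n => Φ n (s n)) : ∑' n, Φ n (r n) ≤ ∑' n, Φ n (s n) :=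
  (hΦ.summable_of_le hr hrs hs).tsum_le_tsum (fun n => (hΦ n).map_le_map (hr n) (hrs n)) hs

theorem summable_div_of_le {σ τ : ℝ} (hr : ∀ n, 0 ≤ r n) (hσ : 0 < σ) (hστ : σ ≤ τ)
    (h : Summable fun n => Φ n (r n / σ)) : Summable fun n => Φ n (r n / τ) :=
  hΦ.summable_of_le (fun n => div_nonneg (hr n) (hσ.trans_le hστ).le)
    (fun n => div_le_div_of_nonneg_left (hr n) hσ hστ) h

theorem summable_add_div_two (hr : ∀ n, 0 ≤ r n) (hs : ∀ n, 0 ≤ s n)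
    (hr' : Summable fun n => Φ n (r n)) (hs' : Summable fun n => Φ n (s n)) :
    Summable fun n => Φ n ((r n + s n) / 2) :=
  ((hr'.add hs').div_const 2).of_nonneg_of_le
    (fun n => (hΦ n).nonneg (by linarith [hr n, hs n]))
    fun n => (hΦ n).map_add_div_two_le (hr n) (hs n)

theorem exists_tsum_div_le_one {σ : ℝ} (hr : ∀ n, 0 ≤ r n) (hσ : 0 < σ)
    (h : Summable fun n => Φ n (r n / σ)) :
    ∃ τ > 0, (Summable fun n => Φ n (r n / τ)) ∧ ∑' n, Φ n (r n / τ) ≤ 1 := by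
  -- `φ (t / l) ≤ φ t / l` for `l ≥ 1`, so `τ = l σ` works once `l` exceeds the modular at `σ`.
  set l := max 1 (∑' n, Φ n (r n / σ))
  have hl : 1 ≤ l := le_max_left _ _
  have hl₀ : 0 < l := one_pos.trans_le hl
  have hterm : ∀ n, Φ n (r n / (l * σ)) ≤ Φ n (r n / σ) / l := fun n => by
    have h' := (hΦ n).map_mul_le (inv_nonneg.2 hl₀.le) (inv_le_one_of_one_le₀ hl)
      (div_nonneg (hr n) hσ.le)
    rw [inv_mul_eq_div, div_div, mul_comm σ] at h'
    rwa [div_eq_inv_mul (Φ n _)]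
  have hsum : Summable fun n => Φ n (r n / (l * σ)) :=
    (h.div_const l).of_nonneg_of_le
      (fun n => (hΦ n).nonneg (div_nonneg (hr n) (by positivity))) hterm
  refine ⟨l * σ, by positivity, hsum, ?_⟩
  calc ∑' n, Φ n (r n / (l * σ)) ≤ ∑' n, Φ n (r n / σ) / l :=
        hsum.tsum_le_tsum hterm (h.div_const l)
    _ = (∑' n, Φ n (r n / σ)) / l := tsum_div_const
    _ ≤ 1 := (div_le_one hl₀).2 (le_max_right _ _)

end IsMusielakOrlicz

section RowSum

variable {X : Type*} [NormedAddCommGroup X] (a : ℕ → ℕ → ℝ) {x y z : ℕ → X} {n : ℕ}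

theorem rowSum_nonneg (x : ℕ → X) (n : ℕ) : 0 ≤ rowSum a x n :=
  tsum_nonneg fun _ => by positivity

theorem summable_row_of_norm_le_add (hy : Summable fun k => |a n k| * ‖y k‖)
    (hz : Summable fun k => |a n k| * ‖z k‖) (h : ∀ k, ‖x k‖ ≤ ‖y k‖ + ‖z k‖) :
    Summable fun k => |a n k| * ‖x k‖ :=
  (hy.add hz).of_nonneg_of_le (fun _ => by positivity) fun k => by
    rw [← mul_add]; exact mul_le_mul_of_nonneg_left (h k) (abs_nonneg _)

theorem rowSum_le_add_of_norm_le_add (hy : Summable fun k => |a n k| * ‖y k‖)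
    (hz : Summable fun k => |a n k| * ‖z k‖) (h : ∀ k, ‖x k‖ ≤ ‖y k‖ + ‖z k‖) :
    rowSum a x n ≤ rowSum a y n + rowSum a z n := by
  rw [rowSum, rowSum, rowSum, ← hy.tsum_add hz]
  refine (summable_row_of_norm_le_add a hy hz h).tsum_le_tsum (fun k => ?_) (hy.add hz)
  rw [← mul_add]; exact mul_le_mul_of_nonneg_left (h k) (abs_nonneg _)

theorem rowSum_le_of_norm_le (hy : Summable fun k => |a n k| * ‖y k‖) (h : ∀ k, ‖x k‖ ≤ ‖y k‖) :
    rowSum a x n ≤ rowSum a y n := by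
  have hle : ∀ k, |a n k| * ‖x k‖ ≤ |a n k| * ‖y k‖ := fun k =>
    mul_le_mul_of_nonneg_left (h k) (abs_nonneg _)
  exact (hy.of_nonneg_of_le (fun _ => by positivity) hle).tsum_le_tsum hle hy

end RowSum

section MemL

variable {X : Type*} [NormedAddCommGroup X] {Φ : ℕ → ℝ → ℝ} (hΦ : IsMusielakOrlicz Φ)
  {a : ℕ → ℕ → ℝ} {w x y : ℕ → X}
include hΦ

theorem memL_of_norm_le_add (hx : MemL Φ a x) (hy : MemL Φ a y)
    (h : ∀ k, ‖w k‖ ≤ ‖x k‖ + ‖y k‖) : MemL Φ a w := by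
  obtain ⟨⟨Cx, hCx⟩, hSx, σx, hσx, hx⟩ := hx
  obtain ⟨⟨Cy, hCy⟩, hSy, σy, hσy, hy⟩ := hy
  set σ := max σx σy
  have hσ : 0 < σ := lt_max_of_lt_left hσx
  have hx' := hΦ.summable_div_of_le (τ := σ) (rowSum_nonneg a x) hσx (le_max_left _ _) hx
  have hy' := hΦ.summable_div_of_le (τ := σ) (rowSum_nonneg a y) hσy (le_max_right _ _) hy
  have hrow : ∀ n, rowSum a w n / (2 * σ) ≤ (rowSum a x n / σ + rowSum a y n / σ) / 2 :=
    fun n => by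
      rw [← add_div, div_div, mul_comm σ]
      exact div_le_div_of_nonneg_right
        (rowSum_le_add_of_norm_le_add a (hSx n) (hSy n) h) (by positivity)
  refine ⟨⟨Cx + Cy, fun k => (h k).trans (add_le_add (hCx k) (hCy k))⟩,
    fun n => summable_row_of_norm_le_add a (hSx n) (hSy n) h, 2 * σ, by positivity, ?_⟩
  exact hΦ.summable_of_le (fun n => div_nonneg (rowSum_nonneg a w n) (by positivity)) hrow
    (hΦ.summable_add_div_two (fun n => div_nonneg (rowSum_nonneg a x n) hσ.le)
      (fun n => div_nonneg (rowSum_nonneg a y n) hσ.le) hx' hy')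

theorem memL_of_norm_le (hy : MemL Φ a y) (h : ∀ k, ‖x k‖ ≤ ‖y k‖) : MemL Φ a x :=
  memL_of_norm_le_add hΦ hy hy fun k => (h k).trans (le_add_of_nonneg_right (norm_nonneg _))

theorem ANorm_le_of_norm_le (hy : MemL Φ a y) (h : ∀ k, ‖x k‖ ≤ ‖y k‖) :
    ANorm Φ a x ≤ ANorm Φ a y := by
  obtain ⟨-, hSy, σ₀, hσ₀, hy⟩ := hy
  have hrow : ∀ σ > 0, ∀ n, rowSum a x n / σ ≤ rowSum a y n / σ := fun σ hσ n =>
    div_le_div_of_nonneg_right (rowSum_le_of_norm_le a (hSy n) h) hσ.le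
  have hx₀ : ∀ σ > 0, ∀ n, 0 ≤ rowSum a x n / σ := fun σ hσ n =>
    div_nonneg (rowSum_nonneg a x n) hσ.le
  refine csInf_le_csInf ⟨0, fun σ hσ => hσ.1.le⟩
    (hΦ.exists_tsum_div_le_one (rowSum_nonneg a y) hσ₀ hy) ?_
  rintro σ ⟨hσ, hsum, hle⟩
  exact ⟨hσ, hΦ.summable_of_le (hx₀ σ hσ) (hrow σ hσ) hsum,
    (hΦ.tsum_le_of_le (hx₀ σ hσ) (hrow σ hσ) hsum).trans hle⟩

end MemL

theorem norm_le_norm_of_nonneg_of_le {X : Type*} [NormedAddCommGroup X] [Lattice X]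
    [HasSolidNorm X] [IsOrderedAddMonoid X] {x y : X} (hx : 0 ≤ x) (hxy : x ≤ y) : ‖x‖ ≤ ‖y‖ :=
  norm_le_norm_of_abs_le_abs <| by
    rw [abs_of_nonneg hx, abs_of_nonneg (hx.trans hxy)]; exact hxy

theorem lPhiA_sigma_dedekind_complete_banach_lattice_general
    {X : Type*} [NormedAddCommGroup X] [Lattice X] [HasSolidNorm X]
    [IsOrderedAddMonoid X]
    (hDC : ∀ f : ℕ → X, (∀ n, 0 ≤ f n) → (∃ b : X, ∀ n, f n ≤ b) →
      ∃ s : X, IsLUB (Set.range f) s)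
    (Φ : ℕ → ℝ → ℝ) (hΦ : IsMusielakOrlicz Φ)
    (a : ℕ → ℕ → ℝ) :
    (∀ x y : ℕ → X, MemL Φ a x → MemL Φ a y → MemL Φ a (fun k => x k ⊔ y k)) ∧
    (∀ x y : ℕ → X, MemL Φ a x → MemL Φ a y → (∀ k, |x k| ≤ |y k|) →
      ANorm Φ a x ≤ ANorm Φ a y) ∧
    (∀ F : ℕ → ℕ → X, (∀ n, MemL Φ a (F n)) → (∀ n k, 0 ≤ F n k) →
      ∀ y : ℕ → X, MemL Φ a y → (∀ n k, F n k ≤ y k) →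
      ∃ x : ℕ → X, MemL Φ a x ∧ (∀ n k, F n k ≤ x k) ∧
        ∀ z : ℕ → X, MemL Φ a z → (∀ n k, F n k ≤ z k) → ∀ k, x k ≤ z k) := by
  refine ⟨fun x y hx hy => memL_of_norm_le_add hΦ hx hy fun k => norm_sup_le_add _ _,
    fun x y _ hy h => ANorm_le_of_norm_le hΦ hy fun k => norm_le_norm_of_abs_le_abs (h k), ?_⟩
  intro F _ hF₀ y hy hFy
  choose x hx using fun k => hDC (F · k) (hF₀ · k) ⟨y k, (hFy · k)⟩
  have hFx : ∀ n k, F n k ≤ x k := fun n k => (hx k).1 ⟨n, rfl⟩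
  have hx_le : ∀ z : ℕ → X, (∀ n k, F n k ≤ z k) → ∀ k, x k ≤ z k := fun z hFz k =>
    (hx k).2 <| by rintro _ ⟨n, rfl⟩; exact hFz n k
  refine ⟨x, memL_of_norm_le hΦ hy fun k => ?_, hFx, fun z _ hFz => hx_le z hFz⟩
  exact norm_le_norm_of_nonneg_of_le ((hF₀ 0 k).trans (hFx 0 k)) (hx_le y hFy k)

/-- if `A ∈ 𝒜` and `X` is a σ-Dedekind complete Banach lattice,
then `l_Φ^A(X)` with the coordinatewise order is a Banach lattice
(lattice operations stay in the space and the norm is monotone with respect to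
absolute values) and it is σ-Dedekind complete. -/
theorem lPhiA_sigma_dedekind_complete_banach_lattice
    {X : Type*} [NormedAddCommGroup X] [Lattice X] [HasSolidNorm X]
    [IsOrderedAddMonoid X] [NormedSpace ℝ X] [CompleteSpace X]
    (hDC : ∀ f : ℕ → X, (∀ n, 0 ≤ f n) → (∃ b : X, ∀ n, f n ≤ b) →
      ∃ s : X, IsLUB (Set.range f) s)
    (Φ : ℕ → ℝ → ℝ) (hΦ : IsMusielakOrlicz Φ)
    (a : ℕ → ℕ → ℝ) (hA : MatrixClassA a) :
    (∀ x y : ℕ → X, MemL Φ a x → MemL Φ a y → MemL Φ a (fun k => x k ⊔ y k)) ∧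
    (∀ x y : ℕ → X, MemL Φ a x → MemL Φ a y → (∀ k, |x k| ≤ |y k|) →
      ANorm Φ a x ≤ ANorm Φ a y) ∧
    (∀ F : ℕ → ℕ → X, (∀ n, MemL Φ a (F n)) → (∀ n k, 0 ≤ F n k) →
      ∀ y : ℕ → X, MemL Φ a y → (∀ n k, F n k ≤ y k) →
      ∃ x : ℕ → X, MemL Φ a x ∧ (∀ n k, F n k ≤ x k) ∧
        ∀ z : ℕ → X, MemL Φ a z → (∀ n k, F n k ≤ z k) → ∀ k, x k ≤ z k) :=
  lPhiA_sigma_dedekind_complete_banach_lattice_general hDC Φ hΦ a
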